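/- The two CCP solution triangles share their circumcenter, which is the incenter of the reference triangle: the vertices V1, V2, V3 of T1 and W1, W2, W3 of T2 are all equidistant from I = [a:b:c], the incenter of ABC; in particular, if V1, V2, V3 are affinely independent, the circumcenter of the triangle (V1,V2,V3) equals I, and likewise for (W1,W2,W3). -/

import Mathlib

/-!
Write `u, v, w` for the tangent lengths `s - a, s - b, s - c`, so that `a = v + w`, `b = w + u`,
`c = u + v` and `I = [v + w : w + u : u + v]`. Expanding `‖P - I‖²` with the side lengths gives,
for `P = [x : y : z]`,
  `‖P - I‖² = u v w / (u + v + w) + Q(u x, v y, w z) / (x + y + z)²`,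
where `Q(X, Y, Z) = X² + Y² + Z² - 2 (X Y + Y Z + Z X)` and `u v w / (u + v + w)` is the squared
inradius; so the incircle is `Q(u x, v y, w z) = 0`. Every vertex of both CCP triangles has the
form `[α² / u : β² / v : γ² / w]` with `α ± β ± γ = 0` (for instance `φ - 1 - (φ - 1) = 0` for
`V1`), and `Q(α², β², γ²) = -(α + β + γ)(-α + β + γ)(α - β + γ)(α + β - γ)` vanishes. Hence all
six vertices lie on the incircle, and in the plane a point equidistant from the vertices of a
triangle is its circumcenter.
-/

open EuclideanGeometry

/-- The point with barycentric coordinates `[x : y : z]` with respect to `(A, B, C)`. -/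
noncomputable def bary (A B C : EuclideanSpace ℝ (Fin 2)) (x y z : ℝ) :
    EuclideanSpace ℝ (Fin 2) :=
  (x + y + z)⁻¹ • (x • A + y • B + z • C)

theorem norm_sq_smul_add_smul_add_smul_of_add_eq_zero {V : Type*} [NormedAddCommGroup V]
    [InnerProductSpace ℝ V] (A B C : V) {x y z : ℝ} (h : x + y + z = 0) :
    ‖x • A + y • B + z • C‖ ^ 2 =
      -(‖B - C‖ ^ 2 * y * z + ‖C - A‖ ^ 2 * z * x + ‖A - B‖ ^ 2 * x * y) := by
  obtain rfl : z = -x - y := by linarith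
  simp only [← real_inner_self_eq_norm_sq, inner_add_left, inner_add_right, inner_sub_left,
    inner_sub_right, real_inner_smul_left, real_inner_smul_right, real_inner_comm A B,
    real_inner_comm A C, real_inner_comm B C]
  ring

theorem dist_lt_dist_add_dist_of_not_collinear {V P : Type*} [NormedAddCommGroup V]
    [NormedSpace ℝ V] [StrictConvexSpace ℝ V] [MetricSpace P] [NormedAddTorsor V P] {A B C : P}
    (h : ¬ Collinear ℝ ({A, B, C} : Set P)) :
    dist B C < dist C A + dist A B ∧ dist C A < dist A B + dist B C ∧
      dist A B < dist B C + dist C A := by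
  have strict : ∀ {X Y Z : P}, ¬ Collinear ℝ ({X, Y, Z} : Set P) →
      dist X Z < dist X Y + dist Y Z :=
    fun h => dist_lt_dist_add_dist_iff.2 fun hw => h hw.collinear
  have hBAC := strict (X := B) (Y := A) (Z := C) (by rwa [Set.insert_comm])
  have hCBA := strict (X := C) (Y := B) (Z := A)
    (by rwa [Set.insert_comm, Set.pair_comm, Set.insert_comm])
  have hACB := strict (X := A) (Y := C) (Z := B) (by rwa [Set.pair_comm])
  refine ⟨?_, ?_, ?_⟩ <;> linarith [dist_comm A B, dist_comm B C, dist_comm C A]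

theorem Affine.Simplex.circumcenter_eq_of_dist_eq {V P : Type*} [NormedAddCommGroup V]
    [InnerProductSpace ℝ V] [FiniteDimensional ℝ V] [MetricSpace P] [NormedAddTorsor V P]
    {n : ℕ} (s : Affine.Simplex ℝ P n) (hn : Module.finrank ℝ V = n) {p : P} {r : ℝ}
    (hr : ∀ i, dist p (s.points i) = r) : s.circumcenter = p :=
  (s.eq_circumcenter_of_dist_eq
    (s.independent.affineSpan_eq_top_iff_card_eq_finrank_add_one.2 (by simp [hn]) ▸
      AffineSubspace.mem_top ℝ V p)
    fun i => dist_comm p (s.points i) ▸ hr i).symm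

section Barycentric

variable (A B C : EuclideanSpace ℝ (Fin 2))

theorem bary_eq_of_add_eq_one {x y z : ℝ} (h : x + y + z = 1) :
    bary A B C x y z = x • A + y • B + z • C := by
  rw [bary, h, inv_one, one_smul]

theorem bary_eq_bary_div (x y z : ℝ) :
    bary A B C x y z = bary A B C (x / (x + y + z)) (y / (x + y + z)) (z / (x + y + z)) := by
  rcases eq_or_ne (x + y + z) 0 with h | h
  · simp [bary, h]
  · have hsum : x / (x + y + z) + y / (x + y + z) + z / (x + y + z) = 1 := by field_simp
    rw [bary, bary, hsum, inv_one, one_smul]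
    module

theorem dist_bary_bary_sq_of_add_eq_one {x y z x' y' z' : ℝ} (h : x + y + z = 1)
    (h' : x' + y' + z' = 1) :
    dist (bary A B C x y z) (bary A B C x' y' z') ^ 2 =
      -(dist B C ^ 2 * (y - y') * (z - z') + dist C A ^ 2 * (z - z') * (x - x')
        + dist A B ^ 2 * (x - x') * (y - y')) := by
  rw [dist_eq_norm, dist_eq_norm, dist_eq_norm, dist_eq_norm, bary_eq_of_add_eq_one A B C h,
    bary_eq_of_add_eq_one A B C h', ← norm_sq_smul_add_smul_add_smul_of_add_eq_zero A B C
      (by linarith : (x - x') + (y - y') + (z - z') = 0)]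
  congr 2
  module

variable {A B C} {u v w : ℝ}

theorem dist_incenter_bary_sq (hBC : dist B C = v + w) (hCA : dist C A = w + u)
    (hAB : dist A B = u + v) (huvw : u + v + w ≠ 0) {x y z : ℝ} (hxyz : x + y + z ≠ 0) :
    dist (bary A B C (v + w) (w + u) (u + v)) (bary A B C x y z) ^ 2 =
      u * v * w / (u + v + w) +
        ((u * x) ^ 2 + (v * y) ^ 2 + (w * z) ^ 2
          - 2 * (u * x * (v * y) + v * y * (w * z) + w * z * (u * x))) / (x + y + z) ^ 2 := by
  rw [bary_eq_bary_div A B C (v + w), bary_eq_bary_div A B C x,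
    show v + w + (w + u) + (u + v) = 2 * (u + v + w) by ring,
    dist_bary_bary_sq_of_add_eq_one A B C (by field_simp; ring) (by field_simp), hBC, hCA, hAB]
  field_simp
  ring

/-- `hcirc` is `√X ± √Y ± √Z = 0` with the square roots cleared. -/
theorem dist_incenter_bary_div_eq_sqrt (hBC : dist B C = v + w) (hCA : dist C A = w + u)
    (hAB : dist A B = u + v) (hu : 0 < u) (hv : 0 < v) (hw : 0 < w) {X Y Z : ℝ}
    (hX : 0 ≤ X) (hY : 0 ≤ Y) (hZ : 0 ≤ Z) (hXYZ : 0 < X + Y + Z)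
    (hcirc : X ^ 2 + Y ^ 2 + Z ^ 2 = 2 * (X * Y + Y * Z + Z * X)) :
    dist (bary A B C (v + w) (w + u) (u + v)) (bary A B C (X / u) (Y / v) (Z / w)) =
      √(u * v * w / (u + v + w)) := by
  have hσ : 0 < X / u + Y / v + Z / w :=
    calc 0 < (X + Y + Z) / (u + v + w) := by positivity
      _ = X / (u + v + w) + Y / (u + v + w) + Z / (u + v + w) := by ring
      _ ≤ X / u + Y / v + Z / w := by gcongr <;> linarith
  rw [← Real.sqrt_sq dist_nonneg, dist_incenter_bary_sq hBC hCA hAB (by positivity) hσ.ne',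
    mul_div_cancel₀ X hu.ne', mul_div_cancel₀ Y hv.ne', mul_div_cancel₀ Z hw.ne', hcirc,
    sub_self, zero_div, add_zero]

end Barycentric

theorem ccp_solutions_share_circumcenter_incenter_general
    (A B C : EuclideanSpace ℝ (Fin 2)) (hABC : AffineIndependent ℝ ![A, B, C])
    (a b c s u v w φ : ℝ)
    (ha : a = dist B C) (hb : b = dist C A) (hc : c = dist A B)
    (hs : s = (a + b + c) / 2)
    (hu : u = s - a) (hv : v = s - b) (hw : w = s - c)
    (I : EuclideanSpace ℝ (Fin 2)) (hI : I = bary A B C a b c)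
    (V1 V2 V3 : EuclideanSpace ℝ (Fin 2))
    (hV1 : V1 = bary A B C (φ ^ 2 / u) (1 / v) ((φ - 1) ^ 2 / w))
    (hV2 : V2 = bary A B C ((φ - 2) ^ 2 / u) (1 / v) ((φ - 1) ^ 2 / w))
    (hV3 : V3 = bary A B C ((φ - 2) ^ 2 / u) ((2 * φ - 3) ^ 2 / v) ((φ - 1) ^ 2 / w))
    (W1 W2 W3 : EuclideanSpace ℝ (Fin 2))
    (hW1 : W1 = bary A B C (1 / u) (φ ^ 2 / v) ((φ + 1) ^ 2 / w))
    (hW2 : W2 = bary A B C ((2 * φ + 1) ^ 2 / u) (φ ^ 2 / v) ((φ + 1) ^ 2 / w))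
    (hW3 : W3 = bary A B C ((2 * φ + 1) ^ 2 / u) ((3 * φ + 2) ^ 2 / v) ((φ + 1) ^ 2 / w)) :
    (dist I V1 = dist I V2 ∧ dist I V2 = dist I V3 ∧ dist I V3 = dist I W1 ∧
      dist I W1 = dist I W2 ∧ dist I W2 = dist I W3) ∧
    (∀ hV : AffineIndependent ℝ ![V1, V2, V3],
      (⟨![V1, V2, V3], hV⟩ : Affine.Triangle ℝ (EuclideanSpace ℝ (Fin 2))).circumcenter = I) ∧
    (∀ hW : AffineIndependent ℝ ![W1, W2, W3],
      (⟨![W1, W2, W3], hW⟩ : Affine.Triangle ℝ (EuclideanSpace ℝ (Fin 2))).circumcenter = I) := by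
  obtain ⟨hab, hbc, hca⟩ :=
    dist_lt_dist_add_dist_of_not_collinear (affineIndependent_iff_not_collinear_set.1 hABC)
  have hu0 : 0 < u := by rw [hu, hs, ha, hb, hc]; linarith
  have hv0 : 0 < v := by rw [hv, hs, ha, hb, hc]; linarith
  have hw0 : 0 < w := by rw [hw, hs, ha, hb, hc]; linarith
  have hBC : dist B C = v + w := by rw [← ha, hv, hw, hs]; ring
  have hCA : dist C A = w + u := by rw [← hb, hw, hu, hs]; ring
  have hAB : dist A B = u + v := by rw [← hc, hu, hv, hs]; ring
  have hI' : I = bary A B C (v + w) (w + u) (u + v) := by rw [hI, ha, hb, hc, hBC, hCA, hAB]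
  have key := @dist_incenter_bary_div_eq_sqrt A B C u v w hBC hCA hAB hu0 hv0 hw0
  rw [← hI'] at key
  have dV1 := hV1 ▸ key (by positivity) (by positivity) (by positivity) (by positivity) (by ring)
  have dV2 := hV2 ▸ key (by positivity) (by positivity) (by positivity) (by positivity) (by ring)
  have dV3 := hV3 ▸ key (by positivity) (by positivity) (by positivity)
    (by nlinarith [sq_nonneg (2 * φ - 3)]) (by ring)
  have dW1 := hW1 ▸ key (by positivity) (by positivity) (by positivity) (by positivity) (by ring)
  have dW2 := hW2 ▸ key (by positivity) (by positivity) (by positivity)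
    (by nlinarith [sq_nonneg (2 * φ + 1)]) (by ring)
  have dW3 := hW3 ▸ key (by positivity) (by positivity) (by positivity)
    (by nlinarith [sq_nonneg (14 * φ + 9)]) (by ring)
  refine ⟨⟨dV1.trans dV2.symm, dV2.trans dV3.symm, dV3.trans dW1.symm, dW1.trans dW2.symm,
    dW2.trans dW3.symm⟩, fun hV => ?_, fun hW => ?_⟩
  · refine Affine.Simplex.circumcenter_eq_of_dist_eq _ finrank_euclideanSpace_fin
      (r := dist I V1) fun i => ?_
    fin_cases i <;> simp [dV1, dV2, dV3]
  · refine Affine.Simplex.circumcenter_eq_of_dist_eq _ finrank_euclideanSpace_fin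
      (r := dist I W1) fun i => ?_
    fin_cases i <;> simp [dW1, dW2, dW3]

/-- The two CCP solution triangles share their circumcenter, which is the incenter `I`
of the reference triangle: all six vertices `V1, V2, V3, W1, W2, W3` are equidistant
from `I`, and whenever the vertex triples are affinely independent their circumcenters
equal `I`. -/
theorem ccp_solutions_share_circumcenter_incenter
    (A B C : EuclideanSpace ℝ (Fin 2)) (hABC : AffineIndependent ℝ ![A, B, C])
    (a b c s u v w φ : ℝ)
    (ha : a = dist B C) (hb : b = dist C A) (hc : c = dist A B)
    (hs : s = (a + b + c) / 2)
    (hu : u = s - a) (hv : v = s - b) (hw : w = s - c)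
    (hφ : φ = (1 + Real.sqrt 5) / 2)
    (I : EuclideanSpace ℝ (Fin 2)) (hI : I = bary A B C a b c)
    (V1 V2 V3 : EuclideanSpace ℝ (Fin 2))
    (hV1 : V1 = bary A B C (φ ^ 2 / u) (1 / v) ((φ - 1) ^ 2 / w))
    (hV2 : V2 = bary A B C ((φ - 2) ^ 2 / u) (1 / v) ((φ - 1) ^ 2 / w))
    (hV3 : V3 = bary A B C ((φ - 2) ^ 2 / u) ((2 * φ - 3) ^ 2 / v) ((φ - 1) ^ 2 / w))
    (W1 W2 W3 : EuclideanSpace ℝ (Fin 2))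
    (hW1 : W1 = bary A B C (1 / u) (φ ^ 2 / v) ((φ + 1) ^ 2 / w))
    (hW2 : W2 = bary A B C ((2 * φ + 1) ^ 2 / u) (φ ^ 2 / v) ((φ + 1) ^ 2 / w))
    (hW3 : W3 = bary A B C ((2 * φ + 1) ^ 2 / u) ((3 * φ + 2) ^ 2 / v) ((φ + 1) ^ 2 / w)) :
    (dist I V1 = dist I V2 ∧ dist I V2 = dist I V3 ∧ dist I V3 = dist I W1 ∧
      dist I W1 = dist I W2 ∧ dist I W2 = dist I W3) ∧
    (∀ hV : AffineIndependent ℝ ![V1, V2, V3],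
      (⟨![V1, V2, V3], hV⟩ : Affine.Triangle ℝ (EuclideanSpace ℝ (Fin 2))).circumcenter = I) ∧
    (∀ hW : AffineIndependent ℝ ![W1, W2, W3],
      (⟨![W1, W2, W3], hW⟩ : Affine.Triangle ℝ (EuclideanSpace ℝ (Fin 2))).circumcenter = I) :=
  ccp_solutions_share_circumcenter_incenter_general A B C hABC a b c s u v w φ ha hb hc hs hu hv hw
    I hI V1 V2 V3 hV1 hV2 hV3 W1 W2 W3 hW1 hW2 hW3
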